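/- Let E be a measurable space, μ a probability measure on E, and (κ_t)_{t≥0} a semigroup of Markov kernels on E with μ invariant for every κ_t, acting on bounded measurable functions by (P_t f)(x) = ∫_E f(y) κ_t(x,dy). Fix 1 < p < q < ∞ and suppose there exists t̃₀ > 0 such that ‖P_{t̃₀} f‖_{L^q(μ)} ≤ ‖f‖_{L^p(μ)} for every bounded measurable f (hypercontractivity). Then there exist constants c̃, λ̃ > 0, depending only on t̃₀, p and q, such that for every bounded measurable f : E → ℝ with f > 0 and μ(f) = 1, and every t ≥ 0, one has ∫_E (P_t f) log(P_t f) dμ ≤ c̃ e^{−λ̃ t} ∫_E f log f dμ. -/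

import Mathlib

open MeasureTheory ProbabilityTheory
open scoped ENNReal NNReal

/-- A bounded measurable real-valued function. -/
def BddMeasurableFn {E : Type*} [MeasurableSpace E] (f : E → ℝ) : Prop :=
  Measurable f ∧ ∃ C : ℝ, ∀ x, |f x| ≤ C

/-- The action of a kernel on a function: `(P f)(x) = ∫ f(y) κ(x,dy)`. -/
noncomputable def kernelOp {E : Type*} [MeasurableSpace E] (κ : Kernel E E) (f : E → ℝ)
    (x : E) : ℝ := ∫ y, f y ∂(κ x)

/-- `(κ t)_{t ≥ 0}` is a semigroup of Markov kernels. -/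
structure IsMarkovSemigroup {E : Type*} [MeasurableSpace E] (κ : ℝ → Kernel E E) : Prop where
  markov : ∀ t : ℝ, IsMarkovKernel (κ t)
  id_zero : κ 0 = Kernel.id
  semigroup : ∀ s t : ℝ, 0 ≤ s → 0 ≤ t → κ (t + s) = (κ t) ∘ₖ (κ s)

/-!
Fix `θ ∈ (0, 1)` and put `1 / p_θ = 1 - θ + θ / p`, `1 / q_θ = 1 - θ + θ / q`. Stein's
interpolation between the `L¹`-contractivity of the invariant kernel `P = P_{t₁}` and its
hypercontractivity gives `‖P f‖_{q_θ} ≤ ‖f‖_{p_θ}`; for a probability density both sides equal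
`1` at `θ = 0`, and comparing derivatives there yields
`(1 - 1/q) Ent(P f) ≤ (1 - 1/p) Ent(f)`. Thus entropy contracts by `c = (1 - 1/p) / (1 - 1/q) < 1`
over every time step `t₁`, and by Jensen it never increases in between; this gives the claim
with `c̃ = 1 / c` and `λ̃ = log (1 / c) / t₁`.
-/

open Set Filter Topology

namespace Real

lemma rpow_eq_mul_exp_mul_log {x : ℝ} (hx : 0 < x) (r : ℝ) :
    x ^ r = x * exp ((r - 1) * log x) := by
  rw [rpow_def_of_pos hx, show log x * r = log x + (r - 1) * log x by ring, exp_add, exp_log hx]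

lemma add_mul_mul_log_le_rpow {x : ℝ} (hx : 0 ≤ x) (r : ℝ) :
    x + (r - 1) * (x * log x) ≤ x ^ r := by
  rcases hx.eq_or_lt with rfl | hx
  · simp [rpow_nonneg]
  rw [rpow_eq_mul_exp_mul_log hx]
  nlinarith [add_one_le_exp ((r - 1) * log x)]

lemma exp_sub_one_sub_le_sq_mul (s : ℝ) : exp s - 1 - s ≤ s ^ 2 * (1 + exp s) := by
  have hlow : s ≤ exp s - 1 := by linarith [add_one_le_exp s]
  have hup : exp s - 1 ≤ s * exp s := by
    have h := mul_le_mul_of_nonneg_right (add_one_le_exp (-s)) (exp_pos s).le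
    rw [← exp_add, neg_add_cancel, exp_zero] at h
    linarith
  rcases le_total 0 s with hs | hs
  · nlinarith [exp_pos s]
  · nlinarith [exp_pos s]

lemma rpow_le_add_mul_mul_log_add {x : ℝ} (hx : 0 < x) (r : ℝ) :
    x ^ r ≤ x + (r - 1) * (x * log x) + (r - 1) ^ 2 * ((x + x ^ r) * log x ^ 2) := by
  have h := mul_le_mul_of_nonneg_left (exp_sub_one_sub_le_sq_mul ((r - 1) * log x)) hx.le
  rw [rpow_eq_mul_exp_mul_log hx]
  linear_combination h

lemma mul_log_sq_le {x C : ℝ} (hx : 0 < x) (hxC : x ≤ C) :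
    x * log x ^ 2 ≤ 4 + C ^ 3 := by
  rcases le_total x 1 with hx1 | hx1
  · have h := abs_log_mul_self_rpow_lt x (1 / 2) hx hx1 (by norm_num)
    have hsq : (x ^ (1 / 2 : ℝ)) ^ 2 = x := by
      rw [← rpow_natCast, ← rpow_mul hx.le]; norm_num
    have h2 : (log x * x ^ (1 / 2 : ℝ)) ^ 2 < 2 ^ 2 := by
      rw [← sq_abs]; gcongr; linarith
    nlinarith [pow_pos (by linarith : (0:ℝ) < C) 3]
  · have hlog0 := log_nonneg hx1
    have hlogC : log x ≤ C := by linarith [log_le_sub_one_of_pos hx]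
    have : log x ^ 2 ≤ C ^ 2 := by gcongr
    nlinarith

lemma rpow_le_add_mul_mul_log_add_sq {x C r : ℝ} (hx : 0 ≤ x) (hxC : x ≤ C) (hC : 1 ≤ C)
    (hr1 : 1 ≤ r) (hr2 : r ≤ 2) :
    x ^ r ≤ x + (r - 1) * (x * log x) + (r - 1) ^ 2 * ((1 + C) * (4 + C ^ 3)) := by
  rcases hx.eq_or_lt with rfl | hx
  · rw [zero_rpow (by linarith)]; simp; positivity
  have hxr : x ^ r ≤ C * x := by
    rcases le_total x 1 with hx1 | hx1
    · calc x ^ r ≤ x ^ (1 : ℝ) := rpow_le_rpow_of_exponent_ge hx hx1 hr1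
        _ ≤ C * x := by rw [rpow_one]; nlinarith
    · calc x ^ r ≤ x ^ (2 : ℝ) := rpow_le_rpow_of_exponent_le hx1 hr2
        _ ≤ C * x := by rw [rpow_two]; nlinarith
  have hrem : (x + x ^ r) * log x ^ 2 ≤ (1 + C) * (4 + C ^ 3) :=
    calc (x + x ^ r) * log x ^ 2 ≤ (1 + C) * (x * log x ^ 2) := by nlinarith [sq_nonneg (log x)]
      _ ≤ (1 + C) * (4 + C ^ 3) := by gcongr; exact mul_log_sq_le hx hxC
  nlinarith [rpow_le_add_mul_mul_log_add hx r, sq_nonneg (r - 1)]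

lemma rpow_le_exp_mul_sub_one {y c : ℝ} (hy : 0 ≤ y) (hc : 0 ≤ c) :
    y ^ c ≤ exp (c * (y - 1)) := by
  rcases hy.eq_or_lt with rfl | hy
  · rcases hc.eq_or_lt with rfl | hc
    · simp
    · rw [zero_rpow hc.ne']; positivity
  rw [rpow_def_of_pos hy, mul_comm]
  gcongr
  exact log_le_sub_one_of_pos hy

end Real

lemma le_of_hasDerivWithinAt_Ioi {f g : ℝ → ℝ} {f' g' a : ℝ}
    (hf : HasDerivWithinAt f f' (Ioi a) a) (hg : HasDerivWithinAt g g' (Ioi a) a)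
    (ha : f a = g a) (hfg : ∀ᶠ x in 𝓝[>] a, f x ≤ g x) : f' ≤ g' := by
  rw [hasDerivWithinAt_iff_tendsto_slope' (by simp)] at hf hg
  refine le_of_tendsto_of_tendsto hf hg ?_
  filter_upwards [hfg, self_mem_nhdsWithin] with x hx (hax : a < x)
  rw [slope_def_field, slope_def_field, ha]
  gcongr

noncomputable def interpolationExponent (p θ : ℝ) : ℝ := (1 - θ + θ / p)⁻¹

section InterpolationExponent

variable {p θ : ℝ}

lemma interpolationExponent_zero (p : ℝ) : interpolationExponent p 0 = 1 := by
  simp [interpolationExponent]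

lemma hasDerivAt_interpolationExponent_zero (p : ℝ) :
    HasDerivAt (interpolationExponent p) (1 - 1 / p) 0 := by
  have h := (((hasDerivAt_id' (0 : ℝ)).const_sub 1).add
    ((hasDerivAt_id' (0 : ℝ)).div_const p)).inv (by simp)
  exact h.congr_deriv (by simp; ring)

lemma one_sub_add_div_pos (hp : 0 < p) (hθ0 : 0 ≤ θ) (hθ1 : θ ≤ 1) : 0 < 1 - θ + θ / p := by
  rcases hθ1.lt_or_eq with hθ1 | rfl
  · have : 0 ≤ θ / p := by positivity
    linarith
  · simpa using hp

lemma interpolationExponent_pos (hp : 0 < p) (hθ0 : 0 ≤ θ) (hθ1 : θ ≤ 1) :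
    0 < interpolationExponent p θ :=
  inv_pos.2 (one_sub_add_div_pos hp hθ0 hθ1)

lemma interpolationExponent_mul_eq_one (hp : 0 < p) (hθ0 : 0 ≤ θ) (hθ1 : θ ≤ 1) :
    interpolationExponent p θ * (1 - θ + θ / p) = 1 :=
  inv_mul_cancel₀ (one_sub_add_div_pos hp hθ0 hθ1).ne'

lemma interpolationExponent_mem_Icc (hp : 1 ≤ p) (hθ0 : 0 ≤ θ) (hθ : θ ≤ 1 / 2) :
    interpolationExponent p θ ∈ Icc 1 2 := by
  have h1 : θ / p ≤ θ := div_le_self hθ0 hp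
  have h2 : 0 ≤ θ / p := by positivity
  constructor
  · exact one_le_inv₀ (by linarith) |>.2 (by linarith)
  · rw [interpolationExponent, inv_le_comm₀ (by linarith) (by norm_num)]
    linarith

end InterpolationExponent

section BddMeasurableFn

variable {E : Type*} [MeasurableSpace E] {f : E → ℝ}

lemma BddMeasurableFn.integrable (hf : BddMeasurableFn f) {μ : Measure E} [IsFiniteMeasure μ] :
    Integrable f μ := by
  obtain ⟨hm, C, hC⟩ := hf
  exact .of_bound hm.aestronglyMeasurable C (ae_of_all _ hC)

lemma BddMeasurableFn.comp (hf : BddMeasurableFn f) {φ : ℝ → ℝ} (hφ : Continuous φ) :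
    BddMeasurableFn fun x => φ (f x) := by
  obtain ⟨hm, C, hC⟩ := hf
  obtain ⟨D, hD⟩ := (isCompact_Icc (a := -C) (b := C)).exists_bound_of_continuousOn hφ.continuousOn
  exact ⟨hφ.measurable.comp hm, D, fun x => hD _ (abs_le.1 (hC x))⟩

lemma BddMeasurableFn.exists_le (hf : BddMeasurableFn f) : ∃ C, 1 ≤ C ∧ ∀ x, f x ≤ C := by
  obtain ⟨-, C, hC⟩ := hf
  exact ⟨max C 1, le_max_right _ _, fun x => (le_abs_self _).trans ((hC x).trans (le_max_left _ _))⟩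

variable {κ : Kernel E E}

lemma BddMeasurableFn.kernelOp [IsMarkovKernel κ] (hf : BddMeasurableFn f) :
    BddMeasurableFn (kernelOp κ f) := by
  obtain ⟨hm, C, hC⟩ := hf
  refine ⟨(hm.stronglyMeasurable.integral_kernel (κ := κ)).measurable, C, fun x => ?_⟩
  have h := norm_integral_le_of_norm_le_const (μ := κ x) (f := f) (C := C)
    (ae_of_all _ fun y => by simpa [Real.norm_eq_abs] using hC y)
  simpa [Real.norm_eq_abs, _root_.kernelOp] using h

lemma kernelOp_nonneg (hf : ∀ x, 0 ≤ f x) (x : E) : 0 ≤ kernelOp κ f x :=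
  integral_nonneg hf

lemma kernelOp_id (hf : Measurable f) : kernelOp Kernel.id f = f := by
  ext x
  rw [kernelOp, Kernel.id_apply, integral_dirac' f x hf.stronglyMeasurable]

lemma kernelOp_comp {η : Kernel E E} [IsMarkovKernel κ] [IsMarkovKernel η]
    (hf : BddMeasurableFn f) : kernelOp (η ∘ₖ κ) f = kernelOp κ (kernelOp η f) := by
  ext x
  exact Kernel.integral_comp hf.integrable

lemma integral_kernelOp {μ : Measure E} (hinv : μ.bind κ = μ) (hf : Integrable f μ) :
    ∫ x, kernelOp κ f x ∂μ = ∫ x, f x ∂μ := by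
  conv_rhs => rw [← hinv, Measure.comp_eq_comp_const_apply]
  rw [Kernel.integral_comp (by rwa [← Measure.comp_eq_comp_const_apply, hinv])]
  rfl

lemma ofReal_kernelOp [IsFiniteKernel κ] (hf : BddMeasurableFn f) (hf0 : ∀ x, 0 ≤ f x) (x : E) :
    ENNReal.ofReal (kernelOp κ f x) = ∫⁻ y, ENNReal.ofReal (f y) ∂κ x :=
  ofReal_integral_eq_lintegral_ofReal hf.integrable (ae_of_all _ hf0)

lemma ofReal_integral_rpow {μ : Measure E} [IsFiniteMeasure μ] (hf : BddMeasurableFn f)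
    (hf0 : ∀ x, 0 ≤ f x) {r : ℝ} (hr : 0 ≤ r) :
    ENNReal.ofReal (∫ x, f x ^ r ∂μ) = ∫⁻ x, ENNReal.ofReal (f x) ^ r ∂μ := by
  rw [ofReal_integral_eq_lintegral_ofReal (hf.comp (Real.continuous_rpow_const hr)).integrable
    (ae_of_all _ fun x => Real.rpow_nonneg (hf0 x) r)]
  exact lintegral_congr fun x => (ENNReal.ofReal_rpow_of_nonneg (hf0 x) hr).symm

end BddMeasurableFn

noncomputable def entropy {E : Type*} [MeasurableSpace E] (μ : Measure E) (f : E → ℝ) : ℝ :=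
  ∫ x, f x * Real.log (f x) ∂μ

section Entropy

variable {E : Type*} [MeasurableSpace E] {μ : Measure E} {f : E → ℝ}

lemma BddMeasurableFn.mul_log (hf : BddMeasurableFn f) :
    BddMeasurableFn fun x => f x * Real.log (f x) :=
  hf.comp Real.continuous_mul_log

lemma mul_log_integral_le_entropy [IsProbabilityMeasure μ] (hf : BddMeasurableFn f)
    (hf0 : ∀ x, 0 ≤ f x) : (∫ x, f x ∂μ) * Real.log (∫ x, f x ∂μ) ≤ entropy μ f :=
  Real.convexOn_mul_log.map_integral_le Real.continuous_mul_log.continuousOn isClosed_Ici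
    (ae_of_all _ hf0) hf.integrable hf.mul_log.integrable

lemma entropy_nonneg [IsProbabilityMeasure μ] (hf : BddMeasurableFn f) (hf0 : ∀ x, 0 ≤ f x)
    (hint : ∫ x, f x ∂μ = 1) : 0 ≤ entropy μ f := by
  simpa [hint] using mul_log_integral_le_entropy (μ := μ) hf hf0

lemma entropy_kernelOp_le [IsFiniteMeasure μ] {κ : Kernel E E} [IsMarkovKernel κ]
    (hinv : μ.bind κ = μ) (hf : BddMeasurableFn f) (hf0 : ∀ x, 0 ≤ f x) :
    entropy μ (kernelOp κ f) ≤ entropy μ f :=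
  calc entropy μ (kernelOp κ f)
      ≤ ∫ x, kernelOp κ (fun y => f y * Real.log (f y)) x ∂μ :=
        integral_mono hf.kernelOp.mul_log.integrable hf.mul_log.kernelOp.integrable
          fun x => mul_log_integral_le_entropy (μ := κ x) hf hf0
    _ = entropy μ f := integral_kernelOp hinv hf.mul_log.integrable

lemma one_add_mul_entropy_le_integral_rpow [IsProbabilityMeasure μ] (hf : BddMeasurableFn f)
    (hf0 : ∀ x, 0 ≤ f x) (hint : ∫ x, f x ∂μ = 1) {r : ℝ} (hr : 0 ≤ r) :
    1 + (r - 1) * entropy μ f ≤ ∫ x, f x ^ r ∂μ :=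
  calc 1 + (r - 1) * entropy μ f = ∫ x, (f x + (r - 1) * (f x * Real.log (f x))) ∂μ := by
        rw [integral_add hf.integrable (hf.mul_log.integrable.const_mul _), integral_const_mul,
          hint, entropy]
    _ ≤ ∫ x, f x ^ r ∂μ :=
        integral_mono (hf.integrable.add (hf.mul_log.integrable.const_mul _))
          (hf.comp (Real.continuous_rpow_const hr)).integrable
          fun x => Real.add_mul_mul_log_le_rpow (hf0 x) r

lemma exists_integral_rpow_le [IsProbabilityMeasure μ] (hf : BddMeasurableFn f)
    (hf0 : ∀ x, 0 ≤ f x) (hint : ∫ x, f x ∂μ = 1) :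
    ∃ K, ∀ r ∈ Icc (1 : ℝ) 2, ∫ x, f x ^ r ∂μ ≤ 1 + (r - 1) * entropy μ f + (r - 1) ^ 2 * K := by
  obtain ⟨C, hC1, hC⟩ := hf.exists_le
  refine ⟨(1 + C) * (4 + C ^ 3), fun r ⟨hr1, hr2⟩ => ?_⟩
  have hint' : Integrable (fun x => f x + (r - 1) * (f x * Real.log (f x))) μ :=
    hf.integrable.add (hf.mul_log.integrable.const_mul _)
  calc ∫ x, f x ^ r ∂μ
      ≤ ∫ x, (f x + (r - 1) * (f x * Real.log (f x)) + (r - 1) ^ 2 * ((1 + C) * (4 + C ^ 3))) ∂μ :=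
        integral_mono (hf.comp (Real.continuous_rpow_const (by linarith))).integrable
          (hint'.add (integrable_const _))
          fun x => Real.rpow_le_add_mul_mul_log_add_sq (hf0 x) (hC x) hC1 hr1 hr2
    _ = 1 + (r - 1) * entropy μ f + (r - 1) ^ 2 * ((1 + C) * (4 + C ^ 3)) := by
        rw [integral_add hint' (integrable_const _), integral_add hf.integrable
          (hf.mul_log.integrable.const_mul _), integral_const_mul, hint, integral_const]
        simp [entropy]

end Entropy

theorem mul_entropy_le_of_integral_rpow_le {E : Type*} [MeasurableSpace E] {μ : Measure E}
    [IsProbabilityMeasure μ] {f g : E → ℝ}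
    (hf : BddMeasurableFn f) (hf0 : ∀ x, 0 ≤ f x) (hfint : ∫ x, f x ∂μ = 1)
    (hg : BddMeasurableFn g) (hg0 : ∀ x, 0 ≤ g x) (hgint : ∫ x, g x ∂μ = 1)
    {p q : ℝ} (hp : 1 ≤ p) (hq : 0 < q)
    (hle : ∀ θ ∈ Ioo (0 : ℝ) 1, ∫ x, g x ^ interpolationExponent q θ ∂μ ≤
      (∫ x, f x ^ interpolationExponent p θ ∂μ) ^
        (interpolationExponent q θ / interpolationExponent p θ)) :
    (1 - 1 / q) * entropy μ g ≤ (1 - 1 / p) * entropy μ f := by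
  obtain ⟨K, hK⟩ := exists_integral_rpow_le hf hf0 hfint
  set P := interpolationExponent p
  set Q := interpolationExponent q
  have hP₀ : P 0 = 1 := interpolationExponent_zero p
  have hQ₀ : Q 0 = 1 := interpolationExponent_zero q
  have hP' : HasDerivAt P (1 - 1 / p) 0 := hasDerivAt_interpolationExponent_zero p
  have hQ' : HasDerivAt Q (1 - 1 / q) 0 := hasDerivAt_interpolationExponent_zero q
  have hlower : HasDerivAt (fun θ => 1 + (Q θ - 1) * entropy μ g)
      ((1 - 1 / q) * entropy μ g) 0 :=
    ((hQ'.sub_const 1).mul_const _).const_add 1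
  have hupper : HasDerivAt
      (fun θ => Real.exp (Q θ / P θ * ((P θ - 1) * entropy μ f + (P θ - 1) ^ 2 * K)))
      ((1 - 1 / p) * entropy μ f) 0 := by
    have h := ((hQ'.div hP' (by simp [hP₀])).mul (((hP'.sub_const 1).mul_const (entropy μ f)).add
      (((hP'.sub_const 1).pow 2).mul_const K))).exp
    exact h.congr_deriv (by simp [hP₀, hQ₀])
  -- Both bounds equal `1` at `θ = 0`: the lower one comes from convexity of `r ↦ x ^ r`, the
  -- upper one from `y ^ c ≤ exp (c (y - 1))` and a second-order expansion of `∫ f ^ r` at `r = 1`.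
  refine le_of_hasDerivWithinAt_Ioi hlower.hasDerivWithinAt hupper.hasDerivWithinAt
    (by simp [hP₀, hQ₀]) ?_
  filter_upwards [Ioo_mem_nhdsGT (by norm_num : (0 : ℝ) < 1 / 2)] with θ ⟨hθ0, hθ⟩
  have hP := interpolationExponent_mem_Icc hp hθ0.le hθ.le
  have hQ0 := interpolationExponent_pos hq hθ0.le (by linarith)
  have hPQ : 0 ≤ Q θ / P θ := div_nonneg hQ0.le (by linarith [hP.1])
  calc 1 + (Q θ - 1) * entropy μ g ≤ ∫ x, g x ^ Q θ ∂μ :=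
        one_add_mul_entropy_le_integral_rpow hg hg0 hgint hQ0.le
    _ ≤ (∫ x, f x ^ P θ ∂μ) ^ (Q θ / P θ) := hle θ ⟨hθ0, by linarith⟩
    _ ≤ Real.exp (Q θ / P θ * ((∫ x, f x ^ P θ ∂μ) - 1)) :=
        Real.rpow_le_exp_mul_sub_one (integral_nonneg fun x => Real.rpow_nonneg (hf0 x) _) hPQ
    _ ≤ Real.exp (Q θ / P θ * ((P θ - 1) * entropy μ f + (P θ - 1) ^ 2 * K)) := by
        gcongr
        linarith [hK _ hP]

section Interpolation

variable {E : Type*} [MeasurableSpace E] {F : E → ℝ≥0∞}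

lemma lintegral_le_lintegral_rpow_mul_lintegral_rpow {ν : Measure E} (hF : Measurable F)
    {a b α β : ℝ} (ha : 0 ≤ a) (hb : 0 ≤ b) (hα : 0 ≤ α) (hβ : 0 ≤ β) (hαβ : α + β = 1)
    (hab : a * α + b * β = 1) :
    ∫⁻ y, F y ∂ν ≤ (∫⁻ y, F y ^ a ∂ν) ^ α * (∫⁻ y, F y ^ b ∂ν) ^ β :=
  calc ∫⁻ y, F y ∂ν = ∫⁻ y, (F y ^ a) ^ α * (F y ^ b) ^ β ∂ν := by
        refine lintegral_congr fun y => ?_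
        rw [← ENNReal.rpow_mul, ← ENNReal.rpow_mul,
          ← ENNReal.rpow_add_of_nonneg _ _ (by positivity) (by positivity), hab, ENNReal.rpow_one]
    _ ≤ _ := ENNReal.lintegral_mul_norm_pow_le (hF.pow_const a).aemeasurable
        (hF.pow_const b).aemeasurable hα hβ hαβ

theorem lintegral_lintegral_rpow_le_of_bind_eq {μ : Measure E} {κ : Kernel E E}
    (hinv : μ.bind κ = μ) (hF : Measurable F) {p q θ : ℝ} (hp : 0 < p) (hq : 0 < q)
    (hθ0 : 0 ≤ θ) (hθ1 : θ ≤ 1)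
    (hHC : ∫⁻ x, (∫⁻ y, F y ^ (interpolationExponent p θ / p) ∂κ x) ^ q ∂μ ≤
      (∫⁻ y, F y ^ interpolationExponent p θ ∂μ) ^ (q / p)) :
    ∫⁻ x, (∫⁻ y, F y ∂κ x) ^ interpolationExponent q θ ∂μ ≤
      (∫⁻ y, F y ^ interpolationExponent p θ ∂μ) ^
        (interpolationExponent q θ / interpolationExponent p θ) := by
  set s := interpolationExponent p θ
  set t := interpolationExponent q θ
  set X := ∫⁻ y, F y ^ s ∂μ
  have hs : s * (1 - θ + θ / p) = 1 := interpolationExponent_mul_eq_one hp hθ0 hθ1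
  have ht : t * (1 - θ + θ / q) = 1 := interpolationExponent_mul_eq_one hq hθ0 hθ1
  have hs0 : 0 < s := interpolationExponent_pos hp hθ0 hθ1
  have ht0 : 0 < t := interpolationExponent_pos hq hθ0 hθ1
  have hkernel : ∀ x, ∫⁻ y, F y ∂κ x ≤
      (∫⁻ y, F y ^ s ∂κ x) ^ (1 - θ) * (∫⁻ y, F y ^ (s / p) ∂κ x) ^ θ := fun x =>
    lintegral_le_lintegral_rpow_mul_lintegral_rpow hF hs0.le (by positivity) (by linarith) hθ0
      (by ring) (by linear_combination hs)
  have hinvF : ∫⁻ x, ∫⁻ y, F y ^ s ∂κ x ∂μ = X := by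
    rw [← Measure.lintegral_bind κ.aemeasurable (hF.pow_const s).aemeasurable, hinv]
  calc ∫⁻ x, (∫⁻ y, F y ∂κ x) ^ t ∂μ
      ≤ ∫⁻ x, (∫⁻ y, F y ^ s ∂κ x) ^ ((1 - θ) * t) *
          ((∫⁻ y, F y ^ (s / p) ∂κ x) ^ q) ^ (θ * t / q) ∂μ := by
        refine lintegral_mono fun x => (ENNReal.rpow_le_rpow (hkernel x) ht0.le).trans_eq ?_
        rw [ENNReal.mul_rpow_of_nonneg _ _ ht0.le, ← ENNReal.rpow_mul, ← ENNReal.rpow_mul,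
          ← ENNReal.rpow_mul]
        congr 2
        field_simp
    _ ≤ (∫⁻ x, ∫⁻ y, F y ^ s ∂κ x ∂μ) ^ ((1 - θ) * t) *
          (∫⁻ x, (∫⁻ y, F y ^ (s / p) ∂κ x) ^ q ∂μ) ^ (θ * t / q) :=
        ENNReal.lintegral_mul_norm_pow_le (hF.pow_const s).lintegral_kernel.aemeasurable
          ((hF.pow_const _).lintegral_kernel.pow_const q).aemeasurable
          (mul_nonneg (by linarith) ht0.le) (by positivity) (by linear_combination ht)
    _ ≤ X ^ ((1 - θ) * t) * (X ^ (q / p)) ^ (θ * t / q) := by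
        rw [hinvF]
        gcongr
    _ = X ^ (t / s) := by
        rw [← ENNReal.rpow_mul, ← ENNReal.rpow_add_of_nonneg _ _ (mul_nonneg (by linarith) ht0.le)
          (by positivity)]
        congr 1
        rw [eq_div_iff hs0.ne', show q / p * (θ * t / q) = θ * t / p by field_simp]
        linear_combination t * hs

end Interpolation

section Hypercontractive

variable {E : Type*} [MeasurableSpace E] {μ : Measure E}

lemma eLpNorm_ofReal_eq_lintegral {u : E → ℝ} (hu : ∀ x, 0 ≤ u x) {r : ℝ} (hr : 0 < r) :
    eLpNorm u (ENNReal.ofReal r) μ = (∫⁻ x, ENNReal.ofReal (u x) ^ r ∂μ) ^ (1 / r) := by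
  rw [eLpNorm_eq_lintegral_rpow_enorm_toReal (by simpa using hr) ENNReal.ofReal_ne_top,
    ENNReal.toReal_ofReal hr.le]
  simp_rw [Real.enorm_eq_ofReal (hu _)]

lemma lintegral_rpow_le_of_eLpNorm_le {g h : E → ℝ} (hg : ∀ x, 0 ≤ g x) (hh : ∀ x, 0 ≤ h x)
    {p q : ℝ} (hp : 0 < p) (hq : 0 < q)
    (hgh : eLpNorm h (ENNReal.ofReal q) μ ≤ eLpNorm g (ENNReal.ofReal p) μ) :
    ∫⁻ x, ENNReal.ofReal (h x) ^ q ∂μ ≤ (∫⁻ x, ENNReal.ofReal (g x) ^ p ∂μ) ^ (q / p) := by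
  rw [eLpNorm_ofReal_eq_lintegral hh hq, eLpNorm_ofReal_eq_lintegral hg hp] at hgh
  calc ∫⁻ x, ENNReal.ofReal (h x) ^ q ∂μ
      = ((∫⁻ x, ENNReal.ofReal (h x) ^ q ∂μ) ^ (1 / q)) ^ q := by
        rw [← ENNReal.rpow_mul, one_div_mul_cancel hq.ne', ENNReal.rpow_one]
    _ ≤ ((∫⁻ x, ENNReal.ofReal (g x) ^ p ∂μ) ^ (1 / p)) ^ q := by gcongr
    _ = (∫⁻ x, ENNReal.ofReal (g x) ^ p ∂μ) ^ (q / p) := by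
        rw [← ENNReal.rpow_mul, one_div_mul_eq_div]

theorem mul_entropy_kernelOp_le_of_hypercontractive [IsProbabilityMeasure μ] {κ : Kernel E E}
    [IsMarkovKernel κ] (hinv : μ.bind κ = μ) {p q : ℝ} (hp : 1 ≤ p) (hq : 0 < q)
    (hHC : ∀ g : E → ℝ, BddMeasurableFn g →
      eLpNorm (kernelOp κ g) (ENNReal.ofReal q) μ ≤ eLpNorm g (ENNReal.ofReal p) μ)
    {f : E → ℝ} (hf : BddMeasurableFn f) (hf0 : ∀ x, 0 ≤ f x) (hint : ∫ x, f x ∂μ = 1) :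
    (1 - 1 / q) * entropy μ (kernelOp κ f) ≤ (1 - 1 / p) * entropy μ f := by
  refine mul_entropy_le_of_integral_rpow_le hf hf0 hint hf.kernelOp (kernelOp_nonneg hf0)
    ((integral_kernelOp hinv hf.integrable).trans hint) hp hq fun θ ⟨hθ0, hθ1⟩ => ?_
  set s := interpolationExponent p θ
  set t := interpolationExponent q θ
  have hs0 : 0 < s := interpolationExponent_pos (by linarith) hθ0.le hθ1.le
  have ht0 : 0 < t := interpolationExponent_pos hq hθ0.le hθ1.le
  have hsp : 0 ≤ s / p := div_nonneg hs0.le (by linarith)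
  have hfs : ∀ y, 0 ≤ f y ^ (s / p) := fun y => Real.rpow_nonneg (hf0 y) _
  have hg : BddMeasurableFn fun y => f y ^ (s / p) :=
    hf.comp (Real.continuous_rpow_const hsp)
  have hHC' := lintegral_rpow_le_of_eLpNorm_le hfs (kernelOp_nonneg hfs) (by linarith) hq
    (hHC _ hg)
  simp_rw [ofReal_kernelOp hg hfs, ← ENNReal.ofReal_rpow_of_nonneg (hf0 _) hsp,
    ← ENNReal.rpow_mul, div_mul_cancel₀ s (by linarith : p ≠ 0)] at hHC'
  have h := lintegral_lintegral_rpow_le_of_bind_eq hinv hf.1.ennreal_ofReal (by linarith) hq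
    hθ0.le hθ1.le hHC'
  simp_rw [← ofReal_kernelOp hf hf0] at h
  have hI : 0 ≤ ∫ x, f x ^ s ∂μ := integral_nonneg fun x => Real.rpow_nonneg (hf0 x) _
  rw [← ofReal_integral_rpow hf.kernelOp (kernelOp_nonneg hf0) ht0.le,
    ← ofReal_integral_rpow hf hf0 hs0.le, ENNReal.ofReal_rpow_of_nonneg hI (by positivity),
    ENNReal.ofReal_le_ofReal_iff (Real.rpow_nonneg hI _)] at h
  exact h

end Hypercontractive

lemma le_inv_mul_exp_of_step_le_mul {e : ℝ → ℝ} {c τ : ℝ} (hc0 : 0 < c) (hc1 : c ≤ 1)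
    (hτ : 0 < τ) (hanti : ∀ t s, 0 ≤ t → 0 ≤ s → e (t + s) ≤ e t)
    (hstep : ∀ t, 0 ≤ t → e (t + τ) ≤ c * e t) (he0 : 0 ≤ e 0) {t : ℝ} (ht : 0 ≤ t) :
    e t ≤ c⁻¹ * Real.exp (-(Real.log c⁻¹ / τ) * t) * e 0 := by
  have hiter : ∀ n : ℕ, e (n * τ) ≤ c ^ n * e 0 := by
    intro n
    induction n with
    | zero => simp
    | succ n ih =>
      calc e ((n + 1 : ℕ) * τ) = e (n * τ + τ) := by push_cast; ring_nf
        _ ≤ c * e (n * τ) := hstep _ (by positivity)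
        _ ≤ c * (c ^ n * e 0) := by gcongr
        _ = c ^ (n + 1) * e 0 := by ring
  set n := ⌊t / τ⌋₊
  have hnt : n * τ ≤ t := (le_div_iff₀ hτ).1 (Nat.floor_le (by positivity))
  have hpow : c ^ n ≤ c⁻¹ * Real.exp (-(Real.log c⁻¹ / τ) * t) := by
    have hlog : Real.log c ≤ 0 := Real.log_nonpos hc0.le hc1
    have htn : t / τ < n + 1 := Nat.lt_floor_add_one _
    calc c ^ n = Real.exp (n * Real.log c) := by rw [Real.exp_nat_mul, Real.exp_log hc0]
      _ ≤ Real.exp (-Real.log c + Real.log c * (t / τ)) := by gcongr; nlinarith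
      _ = c⁻¹ * Real.exp (-(Real.log c⁻¹ / τ) * t) := by
        rw [Real.exp_add, Real.exp_neg, Real.exp_log hc0, Real.log_inv]
        ring_nf
  calc e t = e (n * τ + (t - n * τ)) := by ring_nf
    _ ≤ e (n * τ) := hanti _ _ (by positivity) (by linarith)
    _ ≤ c ^ n * e 0 := hiter n
    _ ≤ c⁻¹ * Real.exp (-(Real.log c⁻¹ / τ) * t) * e 0 := by gcongr

noncomputable def entropyContraction (p q : ℝ) : ℝ := (1 - 1 / p) / (1 - 1 / q)

section EntropyContraction

variable {p q : ℝ}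

lemma one_sub_one_div_pos (hp : 1 < p) : 0 < 1 - 1 / p := by
  rw [one_div, sub_pos]
  exact inv_lt_one_of_one_lt₀ hp

lemma entropyContraction_pos (hp : 1 < p) (hpq : p ≤ q) : 0 < entropyContraction p q :=
  div_pos (one_sub_one_div_pos hp) (one_sub_one_div_pos (hp.trans_le hpq))

lemma entropyContraction_le_one (hp : 1 < p) (hpq : p ≤ q) : entropyContraction p q ≤ 1 := by
  rw [entropyContraction, div_le_one (one_sub_one_div_pos (hp.trans_le hpq))]
  gcongr

lemma entropyContraction_lt_one (hp : 1 < p) (hpq : p < q) : entropyContraction p q < 1 := by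
  rw [entropyContraction, div_lt_one (one_sub_one_div_pos (hp.trans hpq))]
  gcongr

end EntropyContraction

namespace IsMarkovSemigroup

variable {E : Type*} [MeasurableSpace E] {μ : Measure E} [IsProbabilityMeasure μ]
  {κ : ℝ → Kernel E E} {f : E → ℝ}

lemma kernelOp_add (hκ : IsMarkovSemigroup κ) (hf : BddMeasurableFn f) {t s : ℝ} (ht : 0 ≤ t)
    (hs : 0 ≤ s) : kernelOp (κ (t + s)) f = kernelOp (κ s) (kernelOp (κ t) f) := by
  have := hκ.markov t
  have := hκ.markov s
  rw [hκ.semigroup s t hs ht, kernelOp_comp hf]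

theorem entropy_kernelOp_le_of_hypercontractive (hκ : IsMarkovSemigroup κ)
    (hinv : ∀ t, 0 ≤ t → μ.bind (κ t) = μ) {p q : ℝ} (hp : 1 < p) (hpq : p ≤ q) {τ : ℝ}
    (hτ : 0 < τ) (hHC : ∀ g : E → ℝ, BddMeasurableFn g →
      eLpNorm (kernelOp (κ τ) g) (ENNReal.ofReal q) μ ≤ eLpNorm g (ENNReal.ofReal p) μ)
    (hf : BddMeasurableFn f) (hf0 : ∀ x, 0 ≤ f x) (hint : ∫ x, f x ∂μ = 1) {t : ℝ} (ht : 0 ≤ t) :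
    entropy μ (kernelOp (κ t) f) ≤ (entropyContraction p q)⁻¹ *
      Real.exp (-(Real.log (entropyContraction p q)⁻¹ / τ) * t) * entropy μ f := by
  have hdensity : ∀ t, 0 ≤ t → BddMeasurableFn (kernelOp (κ t) f) ∧
      (∀ x, 0 ≤ kernelOp (κ t) f x) ∧ ∫ x, kernelOp (κ t) f x ∂μ = 1 := fun t ht =>
    have := hκ.markov t
    ⟨hf.kernelOp, kernelOp_nonneg hf0, (integral_kernelOp (hinv t ht) hf.integrable).trans hint⟩
  have h := le_inv_mul_exp_of_step_le_mul (e := fun t => entropy μ (kernelOp (κ t) f))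
    (entropyContraction_pos hp hpq) (entropyContraction_le_one hp hpq) hτ
    (fun t s ht hs => ?_) (fun t ht => ?_) ?_ ht
  · simpa only [hκ.id_zero, kernelOp_id hf.1] using h
  · obtain ⟨hPf, hPf0, -⟩ := hdensity t ht
    have := hκ.markov s
    simpa only [hκ.kernelOp_add hf ht hs] using entropy_kernelOp_le (hinv s hs) hPf hPf0
  · obtain ⟨hPf, hPf0, hPfint⟩ := hdensity t ht
    have := hκ.markov τ
    have h := mul_entropy_kernelOp_le_of_hypercontractive (hinv τ hτ.le) hp.le (by linarith)
      hHC hPf hPf0 hPfint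
    rw [entropyContraction, div_mul_eq_mul_div,
      le_div_iff₀ (one_sub_one_div_pos (hp.trans_le hpq)), mul_comm, hκ.kernelOp_add hf ht hτ.le]
    exact h
  · simpa only [hκ.id_zero, kernelOp_id hf.1] using entropy_nonneg hf hf0 hint

end IsMarkovSemigroup

theorem statement_1 (p q : ℝ≥0∞) (hp : 1 < p) (hpq : p < q) (hq : q < ∞)
    (t₁ : ℝ) (ht₁ : 0 < t₁) :
    ∃ ctilde lamtilde : ℝ, 0 < ctilde ∧ 0 < lamtilde ∧
      ∀ (E : Type) [MeasurableSpace E] (μ : Measure E) [IsProbabilityMeasure μ]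
        (κ : ℝ → Kernel E E),
        IsMarkovSemigroup κ →
        -- invariance of μ
        (∀ t : ℝ, 0 ≤ t → μ.bind (fun x => κ t x) = μ) →
        -- hypercontractivity at time t₁
        (∀ f : E → ℝ, BddMeasurableFn f →
          eLpNorm (kernelOp (κ t₁) f) q μ ≤ eLpNorm f p μ) →
        -- exponential decay of entropy
        ∀ f : E → ℝ, BddMeasurableFn f → (∀ x, 0 < f x) → (∫ x, f x ∂μ) = 1 →
          ∀ t : ℝ, 0 ≤ t →
            ∫ x, kernelOp (κ t) f x * Real.log (kernelOp (κ t) f x) ∂μ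
              ≤ ctilde * Real.exp (-lamtilde * t) * ∫ x, f x * Real.log (f x) ∂μ := by
  have hp_top : p ≠ ∞ := (hpq.trans hq).ne
  have hp' : 1 < p.toReal := by simpa using (ENNReal.toReal_lt_toReal (by simp) hp_top).2 hp
  have hpq' : p.toReal < q.toReal := (ENNReal.toReal_lt_toReal hp_top hq.ne).2 hpq
  have hc0 := entropyContraction_pos hp' hpq'.le
  refine ⟨(entropyContraction p.toReal q.toReal)⁻¹,
    Real.log (entropyContraction p.toReal q.toReal)⁻¹ / t₁, inv_pos.2 hc0,
    div_pos (Real.log_pos ((one_lt_inv₀ hc0).2 (entropyContraction_lt_one hp' hpq'))) ht₁, ?_⟩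
  intro E _ μ _ κ hκ hinv hHC f hf hpos hint t ht
  refine hκ.entropy_kernelOp_le_of_hypercontractive hinv hp' hpq'.le ht₁ (fun g hg => ?_) hf
    (fun x => (hpos x).le) hint ht
  rw [ENNReal.ofReal_toReal hp_top, ENNReal.ofReal_toReal hq.ne]
  exact hHC g hg
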